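/- Let K be a field of characteristic zero and let A be the quotient of the free (noncommutative) K-algebra K⟨β,γ⟩ by the two-sided ideal generated by γ³ − β² and βγ + γβ. Then A is a K-vector space of dimension 9. -/

import Mathlib

noncomputable section
open FreeAlgebra

/-- The relations `γ³ − β² = 0` and `βγ + γβ = 0` on the free algebra `K⟨β,γ⟩`
(`β = ι 0`, `γ = ι 1`). -/
inductive ConRel (K : Type*) [Field K] :
    FreeAlgebra K (Fin 2) → FreeAlgebra K (Fin 2) → Prop
  | r1 : ConRel K ((ι K (1 : Fin 2))^3 - (ι K (0 : Fin 2))^2) 0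
  | r2 : ConRel K
      (ι K (0 : Fin 2) * ι K (1 : Fin 2) + ι K (1 : Fin 2) * ι K (0 : Fin 2)) 0

/-!
From `γβ = −βγ` we get `βγ³ = −γ³β`, which by `γ³ = β²` reads `β³ = −β³`; as `2` is invertible,
`β³ = 0`. Since `β²` commutes with `γ`, every word in `β, γ` then reduces to `±β^a γ^b` with
`a, b < 3`, so these nine monomials span. They are independent because the multiplication table
they predict is an honest representation on `K⁹`: left multiplication by `β` and `γ` on the basis
`e (a, b) = β^a γ^b` satisfies the relations, and the monomials send `e (0, 0)` to the nine
distinct basis vectors.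
-/

theorem mul_pow_of_mul_eq_neg_mul {R : Type*} [Ring R] {x y : R} (h : y * x = -(x * y))
    (n : ℕ) : y * x ^ n = (-1) ^ n * x ^ n * y := by
  induction n with
  | zero => simp
  | succ n ih =>
    rw [pow_succ, ← mul_assoc, ih, mul_assoc, h]
    simp [pow_succ, mul_assoc]

theorem Submodule.eq_top_of_one_mem_of_mul_mem {R A : Type*} [CommSemiring R] [Semiring A]
    [Algebra R A] {s : Set A} (hs : Algebra.adjoin R s = ⊤) {M : Submodule R A}
    (h1 : 1 ∈ M) (hmul : ∀ x ∈ s, ∀ m ∈ M, x * m ∈ M) : M = ⊤ := by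
  refine eq_top_iff'.2 fun a => ?_
  have ha : a ∈ Algebra.adjoin R s := hs ▸ Algebra.mem_top
  suffices ∀ m ∈ M, a * m ∈ M by simpa using this 1 h1
  induction ha using Algebra.adjoin_induction with
  | mem x hx => exact hmul x hx
  | algebraMap r =>
    intro m hm
    rw [Algebra.algebraMap_eq_smul_one, smul_mul_assoc, one_mul]
    exact M.smul_mem r hm
  | add x y _ _ hx hy => exact fun m hm => add_mul x y m ▸ M.add_mem (hx m hm) (hy m hm)
  | mul x y _ _ hx hy => exact fun m hm => (mul_assoc x y m).symm ▸ hx _ (hy m hm)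

namespace Laufer

section Spanning

open Submodule

variable {R A : Type*} [CommRing R] [Ring A] [Algebra R A] {b g : A}

theorem pow_three_eq_zero (h₁ : g ^ 3 = b ^ 2) (h₂ : b * g + g * b = 0)
    (htwo : IsUnit (2 : A)) : b ^ 3 = 0 := by
  have hneg : b ^ 3 = -b ^ 3 :=
    calc b ^ 3 = b * g ^ 3 := by rw [h₁, pow_succ']
      _ = -(g ^ 3 * b) := by
        rw [mul_pow_of_mul_eq_neg_mul (eq_neg_of_add_eq_zero_left h₂)]; norm_num
      _ = -b ^ 3 := by rw [h₁, ← pow_succ]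
  rw [← htwo.mul_right_eq_zero, two_mul]
  nth_rw 2 [hneg]
  exact add_neg_cancel _

variable (b g) in
def monomial (p : Fin 3 × Fin 3) : A := b ^ (p.1 : ℕ) * g ^ (p.2 : ℕ)

theorem pow_mul_pow_mem_span_monomial (hb : b ^ 3 = 0) (hg : g ^ 3 = b ^ 2)
    (hcomm : Commute g (b ^ 2)) (i j : ℕ) :
    b ^ i * g ^ j ∈ span R (Set.range (monomial b g)) := by
  induction j using Nat.strong_induction_on generalizing i with
  | _ j ih =>
    by_cases hi : 3 ≤ i
    · simp [pow_eq_zero_of_le hi hb]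
    by_cases hj : 3 ≤ j
    · obtain ⟨k, rfl⟩ := Nat.exists_eq_add_of_le' hj
      have hreduce : b ^ i * g ^ (k + 3) = b ^ (i + 2) * g ^ k := by
        rw [pow_add, hg, (hcomm.pow_left k).eq, pow_add, mul_assoc]
      rw [hreduce]
      exact ih k (by omega) _
    · exact subset_span ⟨(⟨i, by omega⟩, ⟨j, by omega⟩), rfl⟩

theorem span_monomial_eq_top (hgen : Algebra.adjoin R {b, g} = ⊤) (h₁ : g ^ 3 = b ^ 2)
    (h₂ : b * g + g * b = 0) (htwo : IsUnit (2 : A)) :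
    span R (Set.range (monomial b g)) = ⊤ := by
  have hgb : g * b = -(b * g) := eq_neg_of_add_eq_zero_right h₂
  have hcomm : Commute g (b ^ 2) :=
    (by simpa using mul_pow_of_mul_eq_neg_mul hgb 2 : g * b ^ 2 = b ^ 2 * g)
  have hmem := pow_mul_pow_mem_span_monomial (R := R) (pow_three_eq_zero h₁ h₂ htwo) h₁ hcomm
  refine eq_top_of_one_mem_of_mul_mem hgen (by simpa using hmem 0 0) ?_
  rintro x hx m hm
  suffices span R _ ≤ (span R _).comap (LinearMap.mulLeft R x) from this hm
  refine span_le.2 ?_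
  rintro _ ⟨⟨i, j⟩, rfl⟩
  rcases hx with rfl | rfl
  · simpa [monomial, ← mul_assoc, ← pow_succ'] using hmem (i + 1) j
  · rw [SetLike.mem_coe, mem_comap, LinearMap.mulLeft_apply, monomial, ← mul_assoc,
      mul_pow_of_mul_eq_neg_mul hgb, mul_assoc, mul_assoc, ← pow_succ']
    rcases neg_one_pow_eq_or A i with h | h <;> rw [h]
    · simpa using hmem i (j + 1)
    · simpa using neg_mem (hmem i (j + 1))

end Spanning

section RegularRepresentation

variable (R : Type*) [CommRing R]

local notation "e" => Pi.basisFun R (Fin 3 × Fin 3)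

-- Left multiplication by `β` and `γ` on `e (a, b) = β^a γ^b`, using `β³ = 0`, `γβ^a = (-1)^a β^a γ`
-- and `γ³ = β²`.
def betaMul : Module.End R (Fin 3 × Fin 3 → R) :=
  (e).constr R fun p => if p.1 = 2 then 0 else e (p.1 + 1, p.2)

def gammaMul : Module.End R (Fin 3 × Fin 3 → R) :=
  (e).constr R fun p =>
    if p.2 = 2 then (if p.1 = 0 then e (2, 0) else 0) else (-1) ^ (p.1 : ℕ) • e (p.1, p.2 + 1)

theorem betaMul_single (p : Fin 3 × Fin 3) :
    betaMul R (Pi.single p 1) = if p.1 = 2 then 0 else Pi.single (p.1 + 1, p.2) 1 := by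
  rw [← Pi.basisFun_apply R, betaMul, Module.Basis.constr_basis]
  simp

theorem gammaMul_single (p : Fin 3 × Fin 3) :
    gammaMul R (Pi.single p 1) = if p.2 = 2 then (if p.1 = 0 then Pi.single (2, 0) 1 else 0)
      else (-1) ^ (p.1 : ℕ) • Pi.single (p.1, p.2 + 1) 1 := by
  rw [← Pi.basisFun_apply R, gammaMul, Module.Basis.constr_basis]
  simp

theorem gammaMul_pow_three : gammaMul R ^ 3 = betaMul R ^ 2 := by
  refine (e).ext fun p => ?_
  fin_cases p <;> simp [betaMul_single, gammaMul_single, pow_succ]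

theorem betaMul_mul_gammaMul_add : betaMul R * gammaMul R + gammaMul R * betaMul R = 0 := by
  refine (e).ext fun p => ?_
  fin_cases p <;> simp [betaMul_single, gammaMul_single]

end RegularRepresentation

section Quotient

variable (K : Type*) [Field K]

def β : RingQuot (ConRel K) := RingQuot.mkAlgHom K (ConRel K) (ι K 0)

def γ : RingQuot (ConRel K) := RingQuot.mkAlgHom K (ConRel K) (ι K 1)

theorem γ_pow_three : γ K ^ 3 = β K ^ 2 := by
  simpa [β, γ, sub_eq_zero] using RingQuot.mkAlgHom_rel K (ConRel.r1 (K := K))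

theorem β_mul_γ_add_γ_mul_β : β K * γ K + γ K * β K = 0 := by
  simpa [β, γ] using RingQuot.mkAlgHom_rel K (ConRel.r2 (K := K))

theorem adjoin_β_γ : Algebra.adjoin K {β K, γ K} = ⊤ := by
  have hlift : FreeAlgebra.lift K ![β K, γ K] = RingQuot.mkAlgHom K (ConRel K) :=
    FreeAlgebra.hom_ext (funext fun i => by fin_cases i <;> simp [β, γ])
  rw [← Matrix.range_cons_cons_empty, Algebra.adjoin_range_eq_range_freeAlgebra_lift, hlift,
    AlgHom.range_eq_top]
  exact RingQuot.mkAlgHom_surjective K (ConRel K)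

variable {A : Type*} [Ring A] [Algebra K A]

def liftAlgHom (b g : A) (h₁ : g ^ 3 = b ^ 2) (h₂ : b * g + g * b = 0) :
    RingQuot (ConRel K) →ₐ[K] A :=
  RingQuot.liftAlgHom K ⟨FreeAlgebra.lift K ![b, g], by rintro _ _ ⟨⟩ <;> simp [h₁, h₂]⟩

variable (b g : A) (h₁ : g ^ 3 = b ^ 2) (h₂ : b * g + g * b = 0)

theorem liftAlgHom_β : liftAlgHom K b g h₁ h₂ (β K) = b := by
  simp [liftAlgHom, β, RingQuot.liftAlgHom_mkAlgHom_apply]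

theorem liftAlgHom_γ : liftAlgHom K b g h₁ h₂ (γ K) = g := by
  simp [liftAlgHom, γ, RingQuot.liftAlgHom_mkAlgHom_apply]

theorem linearIndependent_monomial : LinearIndependent K (monomial (β K) (γ K)) := by
  let ρ := liftAlgHom K (betaMul K) (gammaMul K) (gammaMul_pow_three K)
    (betaMul_mul_gammaMul_add K)
  let L := LinearMap.applyₗ (Pi.single (0, 0) 1) ∘ₗ ρ.toLinearMap
  have hL : L ∘ monomial (β K) (γ K) = Pi.basisFun K _ := by
    funext p
    simp only [Function.comp_apply, L, LinearMap.comp_apply, LinearMap.applyₗ_apply_apply,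
      AlgHom.toLinearMap_apply, monomial, map_mul, map_pow, ρ, liftAlgHom_β, liftAlgHom_γ,
      Pi.basisFun_apply]
    fin_cases p <;> simp [pow_succ, betaMul_single, gammaMul_single]
  exact LinearIndependent.of_comp L (hL ▸ (Pi.basisFun K _).linearIndependent)

end Quotient

end Laufer

/-- The contraction algebra `K⟨β,γ⟩/(γ³ − β², βγ + γβ)` of the Laufer flop has
dimension 9. -/
theorem dim_contraction_laufer (K : Type*) [Field K] [CharZero K] :
    Module.finrank K (RingQuot (ConRel K)) = 9 := by
  have htwo : IsUnit (2 : RingQuot (ConRel K)) := by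
    have := (IsUnit.mk0 (2 : K) two_ne_zero).map (algebraMap K (RingQuot (ConRel K)))
    rwa [map_ofNat] at this
  have hspan := Laufer.span_monomial_eq_top (Laufer.adjoin_β_γ K) (Laufer.γ_pow_three K)
    (Laufer.β_mul_γ_add_γ_mul_β K) htwo
  rw [Module.finrank_eq_card_basis
    (Module.Basis.mk (Laufer.linearIndependent_monomial K) hspan.ge)]
  rfl

end
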